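/- Under Assumption 1, the uniform law of large numbers holds: sup_{λ ∈ D̃} |G_N(λ) − G(λ)| converges to 0 in probability as N → ∞, where the supremum is taken over the compact parameter set D̃ = [A1,A2]×[−B,B]×[−C,C]. -/

import Mathlib

open MeasureTheory ProbabilityTheory Filter

noncomputable section

/-- The space of observations `(Y^obs, R)` for one examinee and a fixed item is the
discrete space `Option Bool`; we endow it with the discrete σ-algebra. -/
instance : MeasurableSpace (Option Bool) := ⊤

/-- The CDF of the standard normal distribution. -/
def stdNormalCDF (x : ℝ) : ℝ := ((gaussianReal 0 1) (Set.Iic x)).toReal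

/-- The CDF of the standard logistic distribution. -/
def stdLogisticCDF (x : ℝ) : ℝ := 1 / (1 + Real.exp (-x))

/-- Density of the bivariate normal distribution of `(θ, τ)` with mean `(0,0)`,
`Var θ = 1`, `Var τ = vτ` and `Cov(θ, τ) = c`. -/
def biNormalPDF (vτ c : ℝ) (v : ℝ × ℝ) : ℝ :=
  (2 * Real.pi * Real.sqrt (vτ - c ^ 2))⁻¹ *
    Real.exp (-((vτ * v.1 ^ 2 - 2 * c * v.1 * v.2 + v.2 ^ 2) / (2 * (vτ - c ^ 2))))

/-- The marginal probability `P(Y^obs, R | λ)` of the observed data for one examinee and a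
fixed item with parameters `λ = (a, b, ζ)`: the observation `some y` means the response `y`
was observed (`R = 0`), `none` means the response is missing (`R = 1`).  Here
`p = F(a(θ−b))` is the IRT success probability, `π(y) = G(γ0 − τ + ζ + g + γ2·y)` is the
missingness probability, and `(θ, τ)` is integrated against the bivariate normal density. -/
def margLik (F G : ℝ → ℝ) (γ0 γ2 g vτ c : ℝ) (lam : ℝ × ℝ × ℝ) : Option Bool → ℝ
  | some y =>
      ∫ v : ℝ × ℝ,
        ((if y then F (lam.1 * (v.1 - lam.2.1)) else 1 - F (lam.1 * (v.1 - lam.2.1))) *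
            (1 - G (γ0 - v.2 + lam.2.2 + g + γ2 * (if y then 1 else 0)))) *
          biNormalPDF vτ c v
  | none =>
      ∫ v : ℝ × ℝ,
        (F (lam.1 * (v.1 - lam.2.1)) * G (γ0 - v.2 + lam.2.2 + g + γ2) +
            (1 - F (lam.1 * (v.1 - lam.2.1))) * G (γ0 - v.2 + lam.2.2 + g)) *
          biNormalPDF vτ c v

/-- `G_N(λ)`, the normalized log marginal likelihood of the first `N` observations. -/
def GN (F G : ℝ → ℝ) (γ0 γ2 g vτ c : ℝ) {Ω : Type*} (X : ℕ → Ω → Option Bool)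
    (N : ℕ) (lam : ℝ × ℝ × ℝ) (ω : Ω) : ℝ :=
  (N : ℝ)⁻¹ * ∑ i ∈ Finset.range N, Real.log (margLik F G γ0 γ2 g vτ c lam (X i ω))

/-- `G(λ) = E[log P(Y^obs, R | λ)]`, the expectation taken under the true parameter `λ0`. -/
def Gbar (F G : ℝ → ℝ) (γ0 γ2 g vτ c : ℝ) (lam0 lam : ℝ × ℝ × ℝ) : ℝ :=
  ∑ x : Option Bool,
    margLik F G γ0 γ2 g vτ c lam0 x * Real.log (margLik F G γ0 γ2 g vτ c lam x)

/-!
Only three outcomes can be observed, so `G_N(λ) - G(λ) = ∑ₓ (p̂_N(x) - p(x)) log P(x | λ)`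
with `p̂_N` the empirical frequencies. On the parameter box the link arguments `a(θ - b)` and
`γ0 - τ + ζ + g + γ2·y` are bounded in absolute value by functions of `(θ, τ)` alone, so every
factor inside `P(x | λ)` is at least a positive envelope that does not depend on `λ`. Hence
`log P(x | λ)` is bounded uniformly on the box, the supremum is at most a constant times
`∑ₓ |p̂_N(x) - p(x)|`, and that tends to `0` almost surely by the strong law of large numbers.
-/

open Real Finset Topology

structure IsLinkFunction (s : ℝ → ℝ) : Prop where
  mono : Monotone s
  pos : ∀ x, 0 < s x
  lt_one : ∀ x, s x < 1

theorem isLinkFunction_stdLogisticCDF : IsLinkFunction stdLogisticCDF where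
  mono a b hab := by
    unfold stdLogisticCDF
    gcongr
  pos x := by unfold stdLogisticCDF; positivity
  lt_one x := by
    unfold stdLogisticCDF
    rw [div_lt_one (by positivity)]
    linarith [exp_pos (-x)]

theorem gaussianReal_pos_of_volume_ne_zero (m : ℝ) {v : NNReal} (hv : v ≠ 0) {s : Set ℝ}
    (hs : volume s ≠ 0) : 0 < gaussianReal m v s :=
  pos_of_ne_zero fun h => hs (gaussianReal_absolutelyContinuous' m hv h)

theorem isLinkFunction_stdNormalCDF : IsLinkFunction stdNormalCDF where
  mono a b hab :=
    ENNReal.toReal_mono (measure_ne_top _ _) (measure_mono (Set.Iic_subset_Iic.2 hab))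
  pos x := ENNReal.toReal_pos (gaussianReal_pos_of_volume_ne_zero 0 one_ne_zero (by simp)).ne'
    (measure_ne_top _ _)
  lt_one x := by
    have h := gaussianReal_pos_of_volume_ne_zero 0 one_ne_zero (s := (Set.Iic x)ᶜ) (by simp)
    rw [prob_compl_eq_one_sub measurableSet_Iic, tsub_pos_iff_lt] at h
    simpa [stdNormalCDF] using ENNReal.toReal_strict_mono ENNReal.one_ne_top h

def linkFloor (s : ℝ → ℝ) (K : ℝ) : ℝ := s (-K) * (1 - s K)

namespace IsLinkFunction

variable {s : ℝ → ℝ}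

theorem measurable (hs : IsLinkFunction s) : Measurable s := hs.mono.measurable

theorem linkFloor_pos (hs : IsLinkFunction s) (K : ℝ) : 0 < linkFloor s K :=
  mul_pos (hs.pos _) (sub_pos.2 (hs.lt_one _))

theorem linkFloor_lt_one (hs : IsLinkFunction s) (K : ℝ) : linkFloor s K < 1 :=
  mul_lt_one_of_nonneg_of_lt_one_left (hs.pos _).le (hs.lt_one _)
    (sub_le_self _ (hs.pos _).le)

theorem apply_mem_Icc_linkFloor (hs : IsLinkFunction s) {x K : ℝ} (hx : |x| ≤ K) :
    s x ∈ Set.Icc (linkFloor s K) 1 :=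
  ⟨(mul_le_of_le_one_right (hs.pos _).le (sub_le_self _ (hs.pos _).le)).trans
      (hs.mono (neg_le_of_abs_le hx)), (hs.lt_one x).le⟩

theorem one_sub_apply_mem_Icc_linkFloor (hs : IsLinkFunction s) {x K : ℝ} (hx : |x| ≤ K) :
    1 - s x ∈ Set.Icc (linkFloor s K) 1 :=
  ⟨(mul_le_of_le_one_left (sub_pos.2 (hs.lt_one _)).le (hs.lt_one _).le).trans
      (sub_le_sub_left (hs.mono (le_of_abs_le hx)) 1), sub_le_self _ (hs.pos x).le⟩

end IsLinkFunction

theorem mul_mem_Icc_mul {l₁ l₂ u w : ℝ} (hl₁ : 0 ≤ l₁) (hl₂ : 0 ≤ l₂) (hu : u ∈ Set.Icc l₁ 1)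
    (hw : w ∈ Set.Icc l₂ 1) : u * w ∈ Set.Icc (l₁ * l₂) 1 :=
  ⟨mul_le_mul hu.1 hw.1 hl₂ (hl₁.trans hu.1), mul_le_one₀ hu.2 (hl₂.trans hw.1) hw.2⟩

theorem MeasureTheory.Integrable.mul_of_mem_Icc_zero_one {α : Type*} [MeasurableSpace α]
    {μ : Measure α} {D k : α → ℝ} (hD : Integrable D μ) (hk : AEStronglyMeasurable k μ)
    (hk01 : ∀ x, k x ∈ Set.Icc 0 1) : Integrable (fun x => k x * D x) μ :=
  hD.bdd_mul hk (ae_of_all _ fun x => (Real.norm_of_nonneg (hk01 x).1).trans_le (hk01 x).2)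

theorem integral_mul_mem_Icc {α : Type*} [MeasurableSpace α] {μ : Measure α} {D ℓ h : α → ℝ}
    (hD : Integrable D μ) (hD0 : ∀ x, 0 ≤ D x) (hℓ : AEStronglyMeasurable ℓ μ)
    (hh : AEStronglyMeasurable h μ) (hℓ0 : ∀ x, 0 ≤ ℓ x) (hhℓ : ∀ x, h x ∈ Set.Icc (ℓ x) 1) :
    ∫ x, h x * D x ∂μ ∈ Set.Icc (∫ x, ℓ x * D x ∂μ) (∫ x, D x ∂μ) := by
  have hhD := hD.mul_of_mem_Icc_zero_one hh fun x => ⟨(hℓ0 x).trans (hhℓ x).1, (hhℓ x).2⟩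
  have hℓD := hD.mul_of_mem_Icc_zero_one hℓ fun x => ⟨hℓ0 x, (hhℓ x).1.trans (hhℓ x).2⟩
  exact ⟨integral_mono hℓD hhD fun x => mul_le_mul_of_nonneg_right (hhℓ x).1 (hD0 x),
    integral_mono hhD hD fun x => mul_le_of_le_one_left (hD0 x) (hhℓ x).2⟩

theorem abs_log_le_max_of_mem_Icc {m I y : ℝ} (hm : 0 < m) (hy : y ∈ Set.Icc m I) :
    |log y| ≤ max |log m| |log I| :=
  abs_le_max_abs_abs (log_le_log hm hy.1) (log_le_log (hm.trans_le hy.1) hy.2)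

theorem biNormalPDF_nonneg (vτ c : ℝ) (v : ℝ × ℝ) : 0 ≤ biNormalPDF vτ c v := by
  unfold biNormalPDF; positivity

theorem measurable_biNormalPDF (vτ c : ℝ) : Measurable (biNormalPDF vτ c) := by
  unfold biNormalPDF; fun_prop

theorem biNormalPDF_eq_mul_gaussianPDFReal {vτ c : ℝ} (h : c ^ 2 < vτ) (v : ℝ × ℝ) :
    biNormalPDF vτ c v =
      gaussianPDFReal 0 1 v.1 * gaussianPDFReal (c * v.1) (vτ - c ^ 2).toNNReal v.2 := by
  have hd : 0 < vτ - c ^ 2 := sub_pos.2 h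
  have hsqrt : √(2 * π * 1) * √(2 * π * (vτ - c ^ 2)) = 2 * π * √(vτ - c ^ 2) := by
    rw [← sqrt_mul (by positivity), show 2 * π * 1 * (2 * π * (vτ - c ^ 2))
      = (2 * π) ^ 2 * (vτ - c ^ 2) by ring, sqrt_mul (by positivity), sqrt_sq (by positivity)]
  simp only [biNormalPDF, gaussianPDFReal, NNReal.coe_one, Real.coe_toNNReal _ hd.le]
  rw [mul_mul_mul_comm, ← mul_inv, hsqrt, ← exp_add]
  congr 2
  field_simp
  ring

theorem biNormalPDF_pos {vτ c : ℝ} (h : c ^ 2 < vτ) (v : ℝ × ℝ) : 0 < biNormalPDF vτ c v := by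
  rw [biNormalPDF_eq_mul_gaussianPDFReal h]
  exact mul_pos (gaussianPDFReal_pos _ _ _ one_ne_zero)
    (gaussianPDFReal_pos _ _ _ (by simpa using h))

theorem integrable_biNormalPDF {vτ c : ℝ} (h : c ^ 2 < vτ) : Integrable (biNormalPDF vτ c) := by
  have hd : (vτ - c ^ 2).toNNReal ≠ 0 := by simpa using h
  rw [funext (biNormalPDF_eq_mul_gaussianPDFReal h), Measure.volume_eq_prod,
    integrable_prod_iff (by fun_prop)]
  refine ⟨ae_of_all _ fun θ =>
    (integrable_gaussianPDFReal (c * θ) _).const_mul (gaussianPDFReal 0 1 θ), ?_⟩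
  simp only [norm_mul, Real.norm_of_nonneg (gaussianPDFReal_nonneg _ _ _), integral_const_mul,
    integral_gaussianPDFReal_eq_one _ hd, mul_one]
  exact integrable_gaussianPDFReal 0 1

def margLikEnvelope (F G : ℝ → ℝ) (γ0 γ2 g A B C : ℝ) (v : ℝ × ℝ) : ℝ :=
  linkFloor F (A * (|v.1| + B)) * linkFloor G (|γ0 - v.2 + g| + C + |γ2|)

section MarginalLikelihood

variable {F G : ℝ → ℝ} {γ0 γ2 g vτ c : ℝ}

theorem margLikEnvelope_pos (hF : IsLinkFunction F) (hG : IsLinkFunction G) (A B C : ℝ)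
    (v : ℝ × ℝ) : 0 < margLikEnvelope F G γ0 γ2 g A B C v :=
  mul_pos (hF.linkFloor_pos _) (hG.linkFloor_pos _)

theorem margLikEnvelope_le_one (hF : IsLinkFunction F) (hG : IsLinkFunction G) (A B C : ℝ)
    (v : ℝ × ℝ) : margLikEnvelope F G γ0 γ2 g A B C v ≤ 1 :=
  mul_le_one₀ (hF.linkFloor_lt_one _).le (hG.linkFloor_pos _).le (hG.linkFloor_lt_one _).le

theorem measurable_margLikEnvelope (hF : IsLinkFunction F) (hG : IsLinkFunction G)
    (A B C : ℝ) : Measurable (margLikEnvelope F G γ0 γ2 g A B C) := by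
  have := hF.measurable
  have := hG.measurable
  unfold margLikEnvelope linkFloor
  fun_prop

theorem margLik_mem_Icc (hF : IsLinkFunction F) (hG : IsLinkFunction G) (hvτ : c ^ 2 < vτ)
    {A B C : ℝ} {lam : ℝ × ℝ × ℝ} (ha : |lam.1| ≤ A) (hb : |lam.2.1| ≤ B) (hζ : |lam.2.2| ≤ C)
    (x : Option Bool) :
    margLik F G γ0 γ2 g vτ c lam x ∈ Set.Icc
      (∫ v, margLikEnvelope F G γ0 γ2 g A B C v * biNormalPDF vτ c v)
      (∫ v, biNormalPDF vτ c v) := by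
  obtain ⟨a, b, ζ⟩ := lam
  have hFarg (θ : ℝ) : |a * (θ - b)| ≤ A * (|θ| + B) := by
    rw [abs_mul]
    exact mul_le_mul ha ((abs_sub _ _).trans (by gcongr)) (abs_nonneg _)
      ((abs_nonneg _).trans ha)
  have hGarg₀ (τ : ℝ) : |γ0 - τ + ζ + g| ≤ |γ0 - τ + g| + C + |γ2| := by
    calc |γ0 - τ + ζ + g| = |(γ0 - τ + g) + ζ| := by ring_nf
      _ ≤ |γ0 - τ + g| + C := (abs_add_le _ _).trans (by gcongr)
      _ ≤ _ := le_add_of_nonneg_right (abs_nonneg _)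
  have hGarg₁ (τ : ℝ) : |γ0 - τ + ζ + g + γ2| ≤ |γ0 - τ + g| + C + |γ2| := by
    calc |γ0 - τ + ζ + g + γ2| = |(γ0 - τ + g) + ζ + γ2| := by ring_nf
      _ ≤ |γ0 - τ + g| + |ζ| + |γ2| := abs_add_three _ _ _
      _ ≤ _ := by gcongr
  have := hF.measurable
  have := hG.measurable
  have hl₁ (v : ℝ × ℝ) := (hF.linkFloor_pos (A * (|v.1| + B))).le
  have hl₂ (v : ℝ × ℝ) := (hG.linkFloor_pos (|γ0 - v.2 + g| + C + |γ2|)).le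
  rcases x with _ | _ | _ <;>
    simp only [margLik, Bool.false_eq_true, if_false, if_true, mul_zero, add_zero, mul_one] <;>
    refine integral_mul_mem_Icc (integrable_biNormalPDF hvτ) (biNormalPDF_nonneg vτ c)
      (measurable_margLikEnvelope hF hG A B C).aestronglyMeasurable (by fun_prop)
      (fun v => (margLikEnvelope_pos hF hG A B C v).le) fun v => ?_
  · -- `P(R = 1 | θ, τ)` is a convex combination of two values of `G`
    have hG₁ := hG.apply_mem_Icc_linkFloor (hGarg₁ v.2)
    have hG₀ := hG.apply_mem_Icc_linkFloor (hGarg₀ v.2)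
    refine Set.Icc_subset_Icc_left
      (mul_le_of_le_one_left (hl₂ v) (hF.linkFloor_lt_one _).le) ?_
    simpa using
      (convex_Icc _ _) hG₁ hG₀ (hF.pos _).le (sub_nonneg.2 (hF.lt_one _).le) (by ring)
  · exact mul_mem_Icc_mul (hl₁ v) (hl₂ v) (hF.one_sub_apply_mem_Icc_linkFloor (hFarg v.1))
      (hG.one_sub_apply_mem_Icc_linkFloor (hGarg₀ v.2))
  · exact mul_mem_Icc_mul (hl₁ v) (hl₂ v) (hF.apply_mem_Icc_linkFloor (hFarg v.1))
      (hG.one_sub_apply_mem_Icc_linkFloor (hGarg₁ v.2))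

theorem exists_margLik_mem_Icc (hF : IsLinkFunction F) (hG : IsLinkFunction G)
    (hvτ : c ^ 2 < vτ) (A1 A2 B C : ℝ) :
    ∃ m I : ℝ, 0 < m ∧ ∀ lam ∈ Set.Icc A1 A2 ×ˢ (Set.Icc (-B) B ×ˢ Set.Icc (-C) C),
      ∀ x, margLik F G γ0 γ2 g vτ c lam x ∈ Set.Icc m I := by
  set A := max |A1| |A2|
  refine ⟨_, _, ?_, fun lam hlam x => margLik_mem_Icc hF hG hvτ (A := A)
    (abs_le_max_abs_abs hlam.1.1 hlam.1.2) (abs_le.2 hlam.2.1) (abs_le.2 hlam.2.2) x⟩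
  have hpos v : 0 < margLikEnvelope F G γ0 γ2 g A B C v * biNormalPDF vτ c v :=
    mul_pos (margLikEnvelope_pos hF hG A B C v) (biNormalPDF_pos hvτ v)
  have hint : Integrable fun v => margLikEnvelope F G γ0 γ2 g A B C v * biNormalPDF vτ c v :=
    (integrable_biNormalPDF hvτ).mul_of_mem_Icc_zero_one
      (measurable_margLikEnvelope hF hG A B C).aestronglyMeasurable
      fun v => ⟨(margLikEnvelope_pos hF hG A B C v).le, margLikEnvelope_le_one hF hG A B C v⟩
  rw [integral_pos_iff_support_of_nonneg (fun v => (hpos v).le) hint,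
    Function.support_eq_univ fun v => (hpos v).ne']
  simp

end MarginalLikelihood

section EmpiricalFrequency

variable {α Ω : Type*} [Fintype α] {X : ℕ → Ω → α}

def empiricalFreq (X : ℕ → Ω → α) (N : ℕ) (x : α) (ω : Ω) : ℝ :=
  (∑ i ∈ range N, ({x} : Set α).indicator 1 (X i ω)) / N

theorem inv_mul_sum_eq_sum_empiricalFreq_mul (f : α → ℝ) (N : ℕ) (ω : Ω) :
    (N : ℝ)⁻¹ * ∑ i ∈ range N, f (X i ω) = ∑ x, empiricalFreq X N x ω * f x := by
  have hsingle (a : α) : ∑ x, ({x} : Set α).indicator 1 a * f x = f a := by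
    rw [Finset.sum_eq_single a (fun x _ hx => by simp [Ne.symm hx]) (by simp)]
    simp
  rw [Finset.sum_congr rfl fun i _ => (hsingle (X i ω)).symm, Finset.sum_comm, Finset.mul_sum]
  simp only [empiricalFreq, div_eq_inv_mul, mul_assoc, Finset.mul_sum, Finset.sum_mul]

theorem measurable_empiricalFreq [MeasurableSpace α] [MeasurableSingletonClass α]
    [MeasurableSpace Ω] (hX : ∀ i, Measurable (X i)) (N : ℕ) (x : α) :
    Measurable (empiricalFreq X N x) :=
  (Finset.measurable_sum (range N) fun i _ =>
    (measurable_of_countable (({x} : Set α).indicator (1 : α → ℝ))).comp (hX i)).div_const _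

theorem ae_tendsto_empiricalFreq [MeasurableSpace α] [MeasurableSingletonClass α]
    [MeasurableSpace Ω] {μ : Measure Ω} [IsFiniteMeasure μ] (hX : ∀ i, Measurable (X i))
    (hindep : iIndepFun X μ) (hident : ∀ i, IdentDistrib (X i) (X 0) μ μ) :
    ∀ᵐ ω ∂μ, ∀ x, Tendsto (fun N => empiricalFreq X N x ω) atTop
      (𝓝 (μ.real (X 0 ⁻¹' {x}))) := by
  refine ae_all_iff.2 fun x => ?_
  have hφ : Measurable (({x} : Set α).indicator (1 : α → ℝ)) := measurable_of_countable _
  have hZ₀ : (fun ω => ({x} : Set α).indicator (1 : α → ℝ) (X 0 ω))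
      = (X 0 ⁻¹' {x}).indicator 1 :=
    funext fun ω => (Set.indicator_comp_right (X 0)).symm
  have hint := integral_indicator_one (μ := μ) (hX 0 (measurableSet_singleton x))
  rw [← hZ₀] at hint
  have := strong_law_ae_real (fun i ω => ({x} : Set α).indicator (1 : α → ℝ) (X i ω))
    ((integrable_const (1 : ℝ)).indicator (hX 0 (measurableSet_singleton x)))
    (fun i j hij => (hindep.comp (fun _ => _) fun _ => hφ).indepFun hij)
    fun i => (hident i).comp hφ
  rwa [hint] at this

theorem sSup_abs_inv_mul_sum_sub_le {Λ : Type*} {S : Set Λ} {f : Λ → α → ℝ} {M : ℝ}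
    (hM : 0 ≤ M) (hf : ∀ lam ∈ S, ∀ x, |f lam x| ≤ M) (p : α → ℝ) (N : ℕ) (ω : Ω) :
    sSup ((fun lam => |(N : ℝ)⁻¹ * ∑ i ∈ range N, f lam (X i ω) - ∑ x, p x * f lam x|) '' S)
      ≤ M * ∑ x, |empiricalFreq X N x ω - p x| := by
  refine Real.sSup_le ?_ (mul_nonneg hM (Finset.sum_nonneg fun x _ => abs_nonneg _))
  rintro _ ⟨lam, hlam, rfl⟩
  dsimp only
  rw [inv_mul_sum_eq_sum_empiricalFreq_mul, ← Finset.sum_sub_distrib, Finset.mul_sum]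
  refine (Finset.abs_sum_le_sum_abs _ _).trans (Finset.sum_le_sum fun x _ => ?_)
  rw [← sub_mul, abs_mul, mul_comm]
  exact mul_le_mul_of_nonneg_right (hf lam hlam x) (abs_nonneg _)

theorem tendsto_measure_sSup_abs_inv_mul_sum_sub [MeasurableSpace α]
    [MeasurableSingletonClass α] [MeasurableSpace Ω] {μ : Measure Ω} [IsFiniteMeasure μ]
    (hX : ∀ i, Measurable (X i)) (hindep : iIndepFun X μ)
    (hident : ∀ i, IdentDistrib (X i) (X 0) μ μ) {p : α → ℝ}
    (hp : ∀ x, μ.real (X 0 ⁻¹' {x}) = p x) {Λ : Type*} {S : Set Λ} {f : Λ → α → ℝ}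
    (hf : ∃ M, ∀ lam ∈ S, ∀ x, |f lam x| ≤ M) {ε : ℝ} (hε : 0 < ε) :
    Tendsto (fun N : ℕ => μ {ω | ε ≤ sSup ((fun lam =>
        |(N : ℝ)⁻¹ * ∑ i ∈ range N, f lam (X i ω) - ∑ x, p x * f lam x|) '' S)})
      atTop (𝓝 0) := by
  obtain ⟨M, hM⟩ := hf
  set M' := max M 0
  have hdev : TendstoInMeasure μ (fun N ω => ∑ x, |empiricalFreq X N x ω - p x|) atTop 0 := by
    refine tendstoInMeasure_of_tendsto_ae (fun N => ?_) ?_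
    · have := measurable_empiricalFreq hX N
      fun_prop
    · filter_upwards [ae_tendsto_empiricalFreq hX hindep hident] with ω hω
      simpa [hp] using tendsto_finsetSum univ fun x _ => ((hω x).sub_const (p x)).abs
  have hM' : 0 < M' + 1 := by positivity
  refine tendsto_of_tendsto_of_tendsto_of_le_of_le tendsto_const_nhds
    (tendstoInMeasure_iff_dist.1 hdev (ε / (M' + 1)) (by positivity)) (fun _ => zero_le)
    fun N => measure_mono fun ω hω => ?_
  have hT : 0 ≤ ∑ x, |empiricalFreq X N x ω - p x| := Finset.sum_nonneg fun x _ => abs_nonneg _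
  have hbound := sSup_abs_inv_mul_sum_sub_le (X := X) (le_max_right M 0)
    (fun lam hlam x => (hM lam hlam x).trans (le_max_left M 0)) p N ω
  simp only [Set.mem_ofPred_eq, Pi.zero_apply, Real.dist_0_eq_abs, abs_of_nonneg hT] at hω ⊢
  rw [div_le_iff₀ hM']
  nlinarith

end EmpiricalFrequency

theorem identDistrib_of_measure_preimage_singleton {α Ω : Type*} [Countable α]
    [MeasurableSpace α] [MeasurableSingletonClass α] [MeasurableSpace Ω] {μ : Measure Ω}
    {Y Z : Ω → α} (hY : Measurable Y) (hZ : Measurable Z)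
    (h : ∀ x, μ (Y ⁻¹' {x}) = μ (Z ⁻¹' {x})) : IdentDistrib Y Z μ μ where
  aemeasurable_fst := hY.aemeasurable
  aemeasurable_snd := hZ.aemeasurable
  map_eq := Measure.ext_of_singleton fun x => by
    rw [Measure.map_apply hY (measurableSet_singleton x),
      Measure.map_apply hZ (measurableSet_singleton x), h]

theorem uniform_law_of_large_numbers_general
    {Ω : Type*} [MeasurableSpace Ω] (μ : Measure Ω) [IsProbabilityMeasure μ]
    -- the link functions are the standard normal or standard logistic CDF
    (F G : ℝ → ℝ)
    (hF : F = stdNormalCDF ∨ F = stdLogisticCDF)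
    (hG : G = stdNormalCDF ∨ G = stdLogisticCDF)
    -- known missingness parameters and latent covariance structure
    (γ0 γ2 g vτ c : ℝ)
    (hvτ : c ^ 2 < vτ)
    -- the compact parameter set `D̃`
    (A1 A2 B C : ℝ)
    (Dtil : Set (ℝ × ℝ × ℝ))
    (hDtil : Dtil = Set.Icc A1 A2 ×ˢ (Set.Icc (-B) B ×ˢ Set.Icc (-C) C))
    -- the true parameter
    (lam0 : ℝ × ℝ × ℝ) (hlam0 : lam0 ∈ Dtil)
    -- i.i.d. observations distributed according to the true parameter `λ0`
    (X : ℕ → Ω → Option Bool) (hXmeas : ∀ i, Measurable (X i))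
    (hXlaw : ∀ i x, μ (X i ⁻¹' {x}) = ENNReal.ofReal (margLik F G γ0 γ2 g vτ c lam0 x))
    (hXindep : iIndepFun X μ) :
    ∀ ε : ℝ, 0 < ε →
      Tendsto (fun N : ℕ =>
          μ {ω | ε ≤ sSup ((fun lam =>
              |GN F G γ0 γ2 g vτ c X N lam ω - Gbar F G γ0 γ2 g vτ c lam0 lam|) '' Dtil)})
        atTop (nhds 0) := by
  intro ε hε
  have hFlink : IsLinkFunction F := by
    rcases hF with rfl | rfl
    exacts [isLinkFunction_stdNormalCDF, isLinkFunction_stdLogisticCDF]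
  have hGlink : IsLinkFunction G := by
    rcases hG with rfl | rfl
    exacts [isLinkFunction_stdNormalCDF, isLinkFunction_stdLogisticCDF]
  obtain ⟨m, I, hm, hmargLik⟩ :=
    exists_margLik_mem_Icc hFlink hGlink (γ0 := γ0) (γ2 := γ2) (g := g) hvτ A1 A2 B C
  rw [← hDtil] at hmargLik
  have hlaw x : μ.real (X 0 ⁻¹' {x}) = margLik F G γ0 γ2 g vτ c lam0 x := by
    rw [measureReal_def, hXlaw, ENNReal.toReal_ofReal (hm.le.trans (hmargLik lam0 hlam0 x).1)]
  exact tendsto_measure_sSup_abs_inv_mul_sum_sub hXmeas hXindep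
    (fun i => identDistrib_of_measure_preimage_singleton (hXmeas i) (hXmeas 0)
      fun x => by rw [hXlaw, hXlaw])
    hlaw ⟨_, fun lam hlam x => abs_log_le_max_of_mem_Icc hm (hmargLik lam hlam x)⟩ hε

/-- uniform law of large numbers, used in the proof of Theorem 1.
Under Assumption 1, `sup_{λ ∈ D̃} |G_N(λ) − G(λ)| → 0` in probability as `N → ∞`, the
supremum being over the compact parameter set `D̃ = [A1,A2]×[−B,B]×[−C,C]`. -/
theorem uniform_law_of_large_numbers
    {Ω : Type*} [MeasurableSpace Ω] (μ : Measure Ω) [IsProbabilityMeasure μ]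
    -- the link functions are the standard normal or standard logistic CDF
    (F G : ℝ → ℝ)
    (hF : F = stdNormalCDF ∨ F = stdLogisticCDF)
    (hG : G = stdNormalCDF ∨ G = stdLogisticCDF)
    -- known missingness parameters and latent covariance structure
    (γ0 γ1 γ2 g vτ c : ℝ)
    (hγ0 : γ0 < 0) (hγ1 : 0 < γ1) (hγ2 : γ2 < 0) (hvτ : c ^ 2 < vτ)
    -- the compact parameter set `D̃`
    (A1 A2 B C : ℝ) (hA1 : 0 < A1) (hA12 : A1 < A2) (hB : 0 < B) (hC : 0 < C)
    (Dtil : Set (ℝ × ℝ × ℝ))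
    (hDtil : Dtil = Set.Icc A1 A2 ×ˢ (Set.Icc (-B) B ×ˢ Set.Icc (-C) C))
    -- the true parameter
    (lam0 : ℝ × ℝ × ℝ) (hlam0 : lam0 ∈ Dtil)
    -- Assumption 1: the integrals m1, m2, m3, m4 are finite
    (cconst : ℝ)
    (hm1 : Integrable (fun v : ℝ × ℝ => Real.log (F (A1 * (v.1 - B))) * biNormalPDF vτ c v))
    (hm2 : Integrable (fun v : ℝ × ℝ => Real.log (1 - F (A2 * (v.1 + B))) * biNormalPDF vτ c v))
    (hm3 : Integrable (fun v : ℝ × ℝ => Real.log (G (cconst - v.2 - C)) * biNormalPDF vτ c v))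
    (hm4 : Integrable (fun v : ℝ × ℝ => Real.log (1 - G (cconst - v.2 - C)) * biNormalPDF vτ c v))
    -- i.i.d. observations distributed according to the true parameter `λ0`
    (X : ℕ → Ω → Option Bool) (hXmeas : ∀ i, Measurable (X i))
    (hXlaw : ∀ i x, μ (X i ⁻¹' {x}) = ENNReal.ofReal (margLik F G γ0 γ2 g vτ c lam0 x))
    (hXindep : iIndepFun X μ) :
    ∀ ε : ℝ, 0 < ε →
      Tendsto (fun N : ℕ =>
          μ {ω | ε ≤ sSup ((fun lam =>
              |GN F G γ0 γ2 g vτ c X N lam ω - Gbar F G γ0 γ2 g vτ c lam0 lam|) '' Dtil)})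
        atTop (nhds 0) :=
  uniform_law_of_large_numbers_general μ F G hF hG γ0 γ2 g vτ c hvτ A1 A2 B C Dtil hDtil lam0 hlam0
    X hXmeas hXlaw hXindep

end
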